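/- arXiv:1306.1347 — 2 statements merged into one kernel-verified Lean document; each statement's English description precedes it below -/
import Mathlib

section
/- Define β₀⁽⁰⁾(z) = (z − c_0)·b_0(z) − α_1 with b_0(z) = 1, and recursively b_{n+1}(z) = β₀⁽ⁿ⁾(z), β₀⁽ⁿ⁾(z) = (z − c_0)·b_n(z) + β₁⁽ⁿ⁻¹⁾(z) − α_{n+1}·β₀⁽ⁿ⁻¹⁾(z), β_k⁽ⁿ⁾(z) = −c_k·b_n(z) + β_{k+1}⁽ⁿ⁻¹⁾(z) − α_{n+1}·β_k⁽ⁿ⁻¹⁾(z) for k ≥ 1, where β_k⁽⁰⁾(z) = −c_k·b_0(z) − k·c_k + (k−1)·c_{k−1}·α_1 for k ≥ 1. Then for every n ≥ 0, b_n is a monic polynomial of degree n, β₀⁽ⁿ⁾ is monic of degree n+1, and each β_k⁽ⁿ⁾ with k ≥ 1 has degree at most n. -/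
/-! Induction on `n`. In `β₀⁽ⁿ⁺¹⁾` the term `(X - c₀) b_{n+1}` is monic of degree `n + 2`, while
`β₁⁽ⁿ⁾ - α_{n+2} β₀⁽ⁿ⁾` has degree at most `n + 1`; and each `β_k⁽ⁿ⁺¹⁾`, `k ≥ 1`, is a combination
with constant coefficients of `b_{n+1}`, `β_{k+1}⁽ⁿ⁾` and `β_k⁽ⁿ⁾`, all of degree at most `n + 1`. -/

open Polynomial

namespace Polynomial

variable {R : Type*}

theorem Monic.add_of_natDegree_lt [Semiring R] {p q : R[X]} (hp : p.Monic)
    (hq : q.natDegree < p.natDegree) : (p + q).Monic ∧ (p + q).natDegree = p.natDegree :=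
  ⟨hp.add_of_left (degree_lt_degree hq), natDegree_add_eq_left_of_natDegree_lt hq⟩

theorem natDegree_neg_C_mul_add_sub_C_mul_le [Ring R] {p q r : R[X]} {d : ℕ} (a a' : R)
    (hp : p.natDegree ≤ d) (hq : q.natDegree ≤ d) (hr : r.natDegree ≤ d) :
    (-C a * p + q - C a' * r).natDegree ≤ d := by
  rw [← C_neg]
  refine (natDegree_sub_le_of_le (natDegree_add_le_of_degree_le ?_ hq) ?_).trans (max_self d).le
  · exact (natDegree_C_mul_le _ _).trans hp
  · exact (natDegree_C_mul_le _ _).trans hr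

end Polynomial

theorem stmt6 (c : ℕ → ℂ) (α : ℕ → ℂ)
    (b : ℕ → Polynomial ℂ) (B : ℕ → ℕ → Polynomial ℂ)
    (hb0 : b 0 = 1)
    (hB00 : B 0 0 = (X - C (c 0)) * b 0 - C (α 1))
    (hB0k : ∀ k : ℕ, 1 ≤ k →
      B 0 k = -C (c k) * b 0 - C ((k : ℂ) * c k) + C (((k : ℂ) - 1) * c (k - 1) * α 1))
    (hbsucc : ∀ n : ℕ, b (n + 1) = B n 0)
    (hBn0 : ∀ n : ℕ, B (n + 1) 0 =
      (X - C (c 0)) * b (n + 1) + B n 1 - C (α (n + 2)) * B n 0)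
    (hBnk : ∀ n : ℕ, ∀ k : ℕ, 1 ≤ k →
      B (n + 1) k = -C (c k) * b (n + 1) + B n (k + 1) - C (α (n + 2)) * B n k) :
    ∀ n : ℕ, ((b n).Monic ∧ (b n).natDegree = n) ∧
      ((B n 0).Monic ∧ (B n 0).natDegree = n + 1) ∧
      (∀ k : ℕ, 1 ≤ k → (B n k).natDegree ≤ n) := by
  intro n
  induction n with
  | zero =>
    refine ⟨by simp [hb0], ?_, fun k hk => ?_⟩
    · rw [hB00, hb0, mul_one, sub_sub, ← C_add]
      exact ⟨monic_X_sub_C _, natDegree_X_sub_C _⟩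
    · rw [hB0k k hk, hb0, mul_one, ← C_neg, ← C_sub, ← C_add, natDegree_C]
  | succ n ih =>
    obtain ⟨-, ⟨hB0_monic, hB0_deg⟩, hB_deg⟩ := ih
    have hb_monic : (b (n + 1)).Monic := hbsucc n ▸ hB0_monic
    have hb_deg : (b (n + 1)).natDegree = n + 1 := hbsucc n ▸ hB0_deg
    have hlead_monic : ((X - C (c 0)) * b (n + 1)).Monic := (monic_X_sub_C _).mul hb_monic
    have hlead_deg : ((X - C (c 0)) * b (n + 1)).natDegree = n + 2 := by
      rw [(monic_X_sub_C _).natDegree_mul hb_monic, natDegree_X_sub_C, hb_deg, add_comm]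
    refine ⟨⟨hb_monic, hb_deg⟩, ?_, fun k hk => ?_⟩
    · have htail : (B n 1 - C (α (n + 2)) * B n 0).natDegree < n + 2 :=
        (natDegree_sub_le_of_le (hB_deg 1 le_rfl) (natDegree_C_mul_le _ _)).trans_lt
          (by omega)
      rw [hBn0, add_sub_assoc, ← hlead_deg]
      exact hlead_monic.add_of_natDegree_lt (hlead_deg ▸ htail)
    · rw [hBnk n k hk]
      exact natDegree_neg_C_mul_add_sub_C_mul_le _ _ hb_deg.le
        ((hB_deg (k + 1) (by omega)).trans n.le_succ) ((hB_deg k hk).trans n.le_succ)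
end

section
/- Let b_n^+ and b_n^- denote the Faber–Walsh polynomials for E = [−β,−α]∪[α,β] associated with the sequences α⁺ = (a,−a,a,−a,…) and α⁻ = (−a,a,−a,a,…) respectively. Then b_{2n}^+(z) = b_{2n}^-(z) and b_{2n+1}^+(−z) = −b_{2n+1}^-(z) for all z and n. -/
/-! The contour is symmetric, `γ (t + π) = -γ t`, and `ψ` is odd, so `ψ ∘ γ` is `π`-antiperiodic
and so is its derivative `(ψ' ∘ γ) γ'`. Since `u₂ₙ` is even, `u⁺₂ₙ₊₁(-w) = -u⁻₂ₙ₊₁(w)`, and the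
half-turn `t ↦ t + π` carries the integrand of `b⁺₂ₙ₊₁(-z)` to minus that of `b⁻₂ₙ₊₁(z)`.
Integrating over a full period gives the odd-degree identity; the even one is immediate from
`u⁺₂ₙ = u⁻₂ₙ`. -/

open Real

theorem Function.Antiperiodic.hasDerivAt_antiperiodic {𝕜 F : Type*} [NontriviallyNormedField 𝕜]
    [NormedAddCommGroup F] [NormedSpace 𝕜 F] {f f' : 𝕜 → F} {c : 𝕜}
    (hf : Function.Antiperiodic f c) (hf' : ∀ x, HasDerivAt f (f' x) x) :
    Function.Antiperiodic f' c := by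
  intro x
  have hshift : HasDerivAt (fun y ↦ f (y + c)) (f' (x + c)) x := (hf' (x + c)).comp_add_const x c
  have hneg : HasDerivAt (fun y ↦ f (y + c)) (-f' x) x := by
    simp only [hf _]
    exact (hf' x).neg
  exact hshift.unique hneg

theorem intervalIntegral_eq_neg_of_add_eq_neg {E : Type*} [NormedAddCommGroup E] [NormedSpace ℝ E]
    {F G : ℝ → E} {c : ℝ} (hFG : ∀ t, F (t + c) = -G t) (hGF : ∀ t, G (t + c) = -F t) :
    ∫ t in 0..2 * c, F t = -∫ t in 0..2 * c, G t := by
  have hG : Function.Periodic G (2 * c) := fun t ↦ by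
    rw [two_mul, ← add_assoc, hGF, hFG, neg_neg]
  calc ∫ t in 0..2 * c, F t
      = ∫ t in -c..c, F (t + c) := by
        rw [intervalIntegral.integral_comp_add_right]; ring_nf
    _ = -∫ t in -c..c, G t := by simp only [hFG, intervalIntegral.integral_neg]
    _ = -∫ t in 0..2 * c, G t := by
        have := hG.intervalIntegral_add_eq (-c) 0
        ring_nf at this ⊢
        rw [this]

noncomputable def contourIntegrand (ψ ψd : ℂ → ℂ) (γ : ℝ → ℂ) (u : ℂ → ℂ) (z : ℂ) (t : ℝ) : ℂ :=
  u (γ t) * ψd (γ t) / (ψ (γ t) - z) * deriv γ t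

theorem contourIntegrand_add_eq_neg {ψ ψd : ℂ → ℂ} {γ : ℝ → ℂ} {p q : ℂ → ℂ} {c : ℝ}
    (hγ : ∀ t, γ (t + c) = -γ t) (hψ : ∀ t, ψ (-γ t) = -ψ (γ t))
    (hD : Function.Antiperiodic (fun t ↦ ψd (γ t) * deriv γ t) c)
    (hpq : ∀ w, p (-w) = -q w) (z : ℂ) (t : ℝ) :
    contourIntegrand ψ ψd γ p (-z) (t + c) = -contourIntegrand ψ ψd γ q z t := by
  have hDt : ψd (γ (t + c)) * deriv γ (t + c) = -(ψd (γ t) * deriv γ t) := hD t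
  have hden : ψ (γ (t + c)) - -z = -(ψ (γ t) - z) := by rw [hγ, hψ]; ring
  unfold contourIntegrand
  rw [div_mul_eq_mul_div, mul_assoc, hDt, hden, hγ, hpq, div_mul_eq_mul_div, mul_assoc, div_neg]
  ring

theorem stmt14_general (a : ℂ) (K : Set ℂ)
    (ψ ψd : ℂ → ℂ)
    (hψ : ∀ w ∈ K, DifferentiableAt ℂ ψ w)
    (hψd : ∀ w ∈ K, deriv ψ w = ψd w)
    (hψodd : ∀ w ∈ K, ψ (-w) = -ψ w)
    (u2p u2m up um : ℕ → ℂ → ℂ)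
    (hu2pm : ∀ n : ℕ, ∀ τ : ℂ, u2p n τ = u2m n τ)
    (hu2even : ∀ n : ℕ, ∀ τ : ℂ, u2p n (-τ) = u2p n τ)
    (hup : ∀ n : ℕ, ∀ τ : ℂ, up n τ = (τ - a) * u2p n τ)
    (hum : ∀ n : ℕ, ∀ τ : ℂ, um n τ = (τ + a) * u2p n τ)
    (γ : ℝ → ℂ) (hγ : Differentiable ℝ γ)
    (hγK : ∀ t, γ t ∈ K)
    (hγsym : ∀ t, γ (t + π) = -γ t)
    (b2p b2m bp bm : ℕ → ℂ → ℂ)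
    (hb2p : ∀ n z, b2p n z = (1 / (2 * π * Complex.I)) *
      ∫ t in (0 : ℝ)..(2 * π), u2p n (γ t) * ψd (γ t) / (ψ (γ t) - z) * deriv γ t)
    (hb2m : ∀ n z, b2m n z = (1 / (2 * π * Complex.I)) *
      ∫ t in (0 : ℝ)..(2 * π), u2m n (γ t) * ψd (γ t) / (ψ (γ t) - z) * deriv γ t)
    (hbp : ∀ n z, bp n z = (1 / (2 * π * Complex.I)) *
      ∫ t in (0 : ℝ)..(2 * π), up n (γ t) * ψd (γ t) / (ψ (γ t) - z) * deriv γ t)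
    (hbm : ∀ n z, bm n z = (1 / (2 * π * Complex.I)) *
      ∫ t in (0 : ℝ)..(2 * π), um n (γ t) * ψd (γ t) / (ψ (γ t) - z) * deriv γ t) :
    ∀ n : ℕ, ∀ z : ℂ, b2p n z = b2m n z ∧ bp n (-z) = -(bm n z) := by
  intro n z
  refine ⟨by simp only [hb2p, hb2m, hu2pm], ?_⟩
  have hψγ : ∀ t, ψ (-γ t) = -ψ (γ t) := fun t ↦ hψodd _ (hγK t)
  have hD : Function.Antiperiodic (fun t ↦ ψd (γ t) * deriv γ t) π := by
    refine Function.Antiperiodic.hasDerivAt_antiperiodic (f := fun t ↦ ψ (γ t))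
      (fun t ↦ by simp only [hγsym, hψγ]) fun t ↦ ?_
    rw [← hψd _ (hγK t)]
    exact (hψ _ (hγK t)).hasDerivAt.comp t (hγ t).hasDerivAt
  have hpm : ∀ w, up n (-w) = -um n w := fun w ↦ by rw [hup, hum, hu2even]; ring
  have hmp : ∀ w, um n (-w) = -up n w := fun w ↦ by rw [hup, hum, hu2even]; ring
  have hint := intervalIntegral_eq_neg_of_add_eq_neg
    (contourIntegrand_add_eq_neg hγsym hψγ hD hpm z)
    (by simpa only [neg_neg] using contourIntegrand_add_eq_neg hγsym hψγ hD hmp (-z))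
  rw [hbp, hbm, ← mul_neg]
  exact congrArg _ hint

theorem stmt14 (a : ℂ) (K : Set ℂ) (hKsym : ∀ w ∈ K, -w ∈ K)
    (ψ ψd : ℂ → ℂ)
    (hψ : ∀ w ∈ K, DifferentiableAt ℂ ψ w)
    (hψd : ∀ w ∈ K, deriv ψ w = ψd w)
    (hψodd : ∀ w ∈ K, ψ (-w) = -ψ w)
    (u2p u2m up um : ℕ → ℂ → ℂ)
    (hu2pm : ∀ n : ℕ, ∀ τ : ℂ, u2p n τ = u2m n τ)
    (hu2even : ∀ n : ℕ, ∀ τ : ℂ, u2p n (-τ) = u2p n τ)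
    (hup : ∀ n : ℕ, ∀ τ : ℂ, up n τ = (τ - a) * u2p n τ)
    (hum : ∀ n : ℕ, ∀ τ : ℂ, um n τ = (τ + a) * u2p n τ)
    (γ : ℝ → ℂ) (hγ : Differentiable ℝ γ)
    (hγK : ∀ t, γ t ∈ K)
    (hγsym : ∀ t, γ (t + π) = -γ t)
    (b2p b2m bp bm : ℕ → ℂ → ℂ)
    (hb2p : ∀ n z, b2p n z = (1 / (2 * π * Complex.I)) *
      ∫ t in (0 : ℝ)..(2 * π), u2p n (γ t) * ψd (γ t) / (ψ (γ t) - z) * deriv γ t)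
    (hb2m : ∀ n z, b2m n z = (1 / (2 * π * Complex.I)) *
      ∫ t in (0 : ℝ)..(2 * π), u2m n (γ t) * ψd (γ t) / (ψ (γ t) - z) * deriv γ t)
    (hbp : ∀ n z, bp n z = (1 / (2 * π * Complex.I)) *
      ∫ t in (0 : ℝ)..(2 * π), up n (γ t) * ψd (γ t) / (ψ (γ t) - z) * deriv γ t)
    (hbm : ∀ n z, bm n z = (1 / (2 * π * Complex.I)) *
      ∫ t in (0 : ℝ)..(2 * π), um n (γ t) * ψd (γ t) / (ψ (γ t) - z) * deriv γ t) :
    ∀ n : ℕ, ∀ z : ℂ, b2p n z = b2m n z ∧ bp n (-z) = -(bm n z) :=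
  stmt14_general a K ψ ψd hψ hψd hψodd u2p u2m up um hu2pm hu2even hup hum γ hγ hγK hγsym b2p b2m bp
    bm hb2p hb2m hbp hbm
end
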